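/- In the toy theory of Section 5, starting from the initial pure state (∅,∅,∅,∅): if Alice first measures A₁ or A₂, and then Bob measures both B₁ and B₂ (each exactly once, in either order), then each of the four outcome pairs in {−1,+1}² for Bob's two measurements occurs with probability exactly 1/4, independently of which observable Alice measured and of the order of Bob's measurements. -/

import Mathlib

/-! ## The toy theory of Section 5

Hidden values: `und` = ∅ (undetermined), `pm`/`pp` = potential value −1/+1,
`am`/`ap` = actual value −1/+1. -/

/-- The five hidden values `V = {∅, −, +, ⊖, ⊕}`. -/
inductive HV
  | und | pm | pp | am | ap
  deriving DecidableEq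

instance : Fintype HV where
  elems := {HV.und, HV.pm, HV.pp, HV.am, HV.ap}
  complete := by intro x; cases x <;> decide

/-- The four ±1-valued observables. -/
inductive Obs
  | A1 | A2 | B1 | B2
  deriving DecidableEq

instance : Fintype Obs where
  elems := {Obs.A1, Obs.A2, Obs.B1, Obs.B2}
  complete := by intro x; cases x <;> decide

/-- A pure state: a hidden value for each observable. -/
abbrev PState := Obs → HV

/-- Construct a pure state from hidden values of `A₁, A₂, B₁, B₂`. -/
def mkS (a₁ a₂ b₁ b₂ : HV) : PState := fun x =>
  match x with
  | .A1 => a₁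
  | .A2 => a₂
  | .B1 => b₁
  | .B2 => b₂

/-- The completely undetermined state `(∅, ∅, ∅, ∅)`. -/
def initS : PState := fun _ => HV.und

/-- The other observable of the same party. -/
def partner : Obs → Obs
  | .A1 => .A2
  | .A2 => .A1
  | .B1 => .B2
  | .B2 => .B1

/-- The actual hidden value recording outcome `o ∈ {-1, 1}`. -/
def actual (o : ℤ) : HV := if o = 1 then .ap else .am

/-- Whether a hidden value is a potential value (− or +). -/
def isPot : HV → Bool
  | .pm => true
  | .pp => true
  | _ => false

/-- Probability of the outcome `o` when measuring observable `x` on state `s`: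
uniform on ±1 if the hidden value is undetermined, otherwise the potential or actual
value occurs with certainty. -/
noncomputable def outProb (x : Obs) (s : PState) (o : ℤ) : ℝ :=
  match s x with
  | .und => if o = 1 ∨ o = -1 then 1/2 else 0
  | .pm => if o = -1 then 1 else 0
  | .pp => if o = 1 then 1 else 0
  | .am => if o = -1 then 1 else 0
  | .ap => if o = 1 then 1 else 0

/-- Post-measurement states on the completely undetermined state `(∅,∅,∅,∅)`
(Table 3 of the paper). -/
def table : Obs → ℤ → PState
  | .A1, o => if o = 1 then mkS .ap .und .pp .pp else mkS .am .und .pm .pm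
  | .A2, o => if o = 1 then mkS .und .ap .pp .pm else mkS .und .am .pm .pp
  | .B1, o => if o = 1 then mkS .pp .pp .ap .und else mkS .pm .pm .am .und
  | .B2, o => if o = 1 then mkS .pp .pm .und .ap else mkS .pm .pp .und .am

/-- The post-measurement state after measuring `x` with outcome `o` on state `s`,
where the partner observable of `x` receives the hidden value `w`: the measured
observable acquires the actual value matching the outcome, and all other hidden
values stay untouched. -/
def post (x : Obs) (o : ℤ) (s : PState) (w : HV) : PState :=
  Function.update (Function.update s (partner x) w) x (actual o)

/-- The measurement kernel: `stepProb x s o t` is the probability that measuring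
observable `x` on pre-measurement state `s` gives outcome `o` and post-measurement
state `t`.  On `(∅,∅,∅,∅)` it is given by Table 3; on any other state the outcome
is distributed according to `outProb`, the measured observable acquires the actual
value matching the outcome, all other hidden values stay untouched, except that a
potential value of the partner observable flips its sign with probability 1/2. -/
noncomputable def stepProb (x : Obs) (s : PState) (o : ℤ) (t : PState) : ℝ :=
  if s = initS then
    if (o = 1 ∨ o = -1) ∧ t = table x o then 1/2 else 0
  else
    outProb x s o *
      (if isPot (s (partner x)) then
        (if t = post x o s HV.pm then 1/2 else 0) +
          (if t = post x o s HV.pp then 1/2 else 0)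
      else
        if t = post x o s (s (partner x)) then 1 else 0)

/-- Probability that the measurement sequence `ms` on initial state `s` produces
the outcome sequence `os`. -/
noncomputable def seqProb : PState → List Obs → List ℤ → ℝ
  | _, [], [] => 1
  | s, x :: ms, o :: os => ∑ t : PState, stepProb x s o t * seqProb t ms os
  | _, _, _ => 0

lemma sum_init (x : Obs) (o : ℤ) (f : PState → ℝ) :
    ∑ t : PState, stepProb x initS o t * f t =
      if o = 1 ∨ o = -1 then 1/2 * f (table x o) else 0 := by
  simp only [stepProb, if_pos rfl]
  by_cases h : o = 1 ∨ o = -1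
  · simp [h, Finset.sum_ite_eq']
  · simp [h]

lemma sum_noninit (x : Obs) (s : PState) (o : ℤ) (f : PState → ℝ)
    (hs : ¬ s = initS) :
    ∑ t : PState, stepProb x s o t * f t =
      outProb x s o *
        (if isPot (s (partner x)) then
          1/2 * f (post x o s HV.pm) + 1/2 * f (post x o s HV.pp)
        else f (post x o s (s (partner x)))) := by
  simp only [stepProb, if_neg hs]
  by_cases h : isPot (s (partner x))
  · simp only [h, if_true, mul_assoc, ← Finset.mul_sum, add_mul,
      Finset.sum_add_distrib]
    simp [Finset.sum_ite_eq', mul_add]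
  · simp only [h, if_false, mul_assoc, ← Finset.mul_sum]
    simp [Finset.sum_ite_eq']

/-- key step in the proof of Proposition 1 of the paper.
Starting from `(∅,∅,∅,∅)`: if Alice first measures `A₁` or `A₂` and then Bob
measures both `B₁` and `B₂` (each exactly once, in either order), then each of the
four outcome pairs for Bob's two measurements occurs with probability exactly 1/4,
independently of Alice's choice and of the order of Bob's measurements (Alice's
outcome being marginalized over). -/
theorem bob_outcomes_uniform_after_alice
    (X : Obs) (hX : X = Obs.A1 ∨ X = Obs.A2)
    (Y₁ Y₂ : Obs)
    (hY : (Y₁ = Obs.B1 ∧ Y₂ = Obs.B2) ∨ (Y₁ = Obs.B2 ∧ Y₂ = Obs.B1))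
    (b₁ b₂ : ℤ) (hb₁ : b₁ = 1 ∨ b₁ = -1) (hb₂ : b₂ = 1 ∨ b₂ = -1) :
    ∑ a ∈ ({-1, 1} : Finset ℤ), seqProb initS [X, Y₁, Y₂] [a, b₁, b₂] = 1/4 := by
  rcases hX with rfl | rfl <;>
    rcases hY with ⟨rfl, rfl⟩ | ⟨rfl, rfl⟩ <;>
    rcases hb₁ with rfl | rfl <;>
    rcases hb₂ with rfl | rfl <;>
  · rw [Finset.sum_pair (by norm_num : (-1 : ℤ) ≠ 1)]
    simp (config := { decide := true }) only [seqProb, sum_init, sum_noninit]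
    norm_num (config := { decide := true }) [table, post, outProb, isPot,
      partner, actual, mkS, Function.update, initS]
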